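/- Let M be a map and let E0 be an edge of M exactly one of whose extremities is a leaf. Then E0 is straight, and M \ E0 has one fewer vertex and one fewer edge than M, while the numbers of faces and of connected components are unchanged; consequently d(M \ E0) = d(M). -/

import Mathlib

open Equiv Polynomial

open scoped Classical

noncomputable section

variable {α : Type*}

/-- `f` is a *pairing* of the finite set `S`: an involution of the ambient type which
moves exactly the elements of `S` (i.e., a fixpoint-free involution of `S`, extended by
the identity outside of `S`); the pairs of the pairing are the orbits `{a, f a}`. -/
def IsPairing (S : Finset α) (f : Equiv.Perm α) : Prop :=
  (∀ a, f (f a) = a) ∧ ∀ a, f a ≠ a ↔ a ∈ S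

/-- The pairing `P_{{s₁,s₂}}` obtained from the pairing `f` by removing the elements
`s₁, s₂` : if `{s₁,s₂}` is a pair of `f` it is simply deleted; otherwise the pairs
containing `s₁` and `s₂` are deleted and the partners `f s₁`, `f s₂` are matched
together. -/
def removeP (f : Equiv.Perm α) (s₁ s₂ : α) : Equiv.Perm α :=
  Equiv.swap s₁ s₂ * Equiv.swap s₁ (f s₂) * Equiv.swap s₂ (f s₁) * f

/-- `t` lies in the polygon of `L(b,w)` containing `s`, in *even position* with
respect to `s`: `t` is obtained from `s` by an odd alternating word in the
involutions `b` and `w`. -/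
def EvenPos (b w : Equiv.Perm α) (s t : α) : Prop :=
  ∃ j : ℤ, t = ((w * b) ^ j * b) s

/-- `t` lies in the polygon of `L(b,w)` containing `s`, in *odd position* with respect
to `s`: `t` is obtained from `s` by an even alternating word in the involutions
`b` and `w`. -/
def OddPos (b w : Equiv.Perm α) (s t : α) : Prop :=
  ∃ j : ℤ, t = ((w * b) ^ j) s

/-- `s` and `t` lie in the same polygon of `L(b,w)`. -/
def SameFace (b w : Equiv.Perm α) (s t : α) : Prop :=
  EvenPos b w s t ∨ OddPos b w s t

/-- The edge `{s,t}` is *straight*: both edge-sides lie in the same face,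
in even position. -/
def IsStraight (b w : Equiv.Perm α) (s t : α) : Prop :=
  SameFace b w s t ∧ EvenPos b w s t

/-- The edge `{s,t}` is *twisted*: both edge-sides lie in the same face,
in odd position. -/
def IsTwisted (b w : Equiv.Perm α) (s t : α) : Prop :=
  SameFace b w s t ∧ OddPos b w s t

/-- The edge `{s,t}` is an *interface* edge: its edge-sides lie in two
different faces. -/
def IsInterface (b w : Equiv.Perm α) (s t : α) : Prop :=
  ¬ SameFace b w s t

/-- The polygon (face) of `L(b,w)` containing `s`, as the set of its edge-sides. -/
def faceOf (S : Finset α) (b w : Equiv.Perm α) (s : α) : Finset α :=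
  S.filter (SameFace b w s)

/-- The collection of polygons (faces) of `L(b,w)`. -/
def faces (S : Finset α) (b w : Equiv.Perm α) : Finset (Finset α) :=
  S.image (faceOf S b w)

/-- The number of polygons (faces) of `L(b,w)`. -/
def numFaces (S : Finset α) (b w : Equiv.Perm α) : ℕ :=
  (faces S b w).card

/-- The *type* of the couple of pairings `(b,w)`: the multiset of half-lengths of the
polygons of `L(b,w)`. -/
def faceType (S : Finset α) (b w : Equiv.Perm α) : Multiset ℕ :=
  (faces S b w).val.map fun F => F.card / 2

/-- `s` and `t` lie in the same connected component of the map `(b,w,e)`: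
`t` is obtained from `s` by applying partner maps in `b`, `w`, `e` repeatedly. -/
def SameComponent (b w e : Equiv.Perm α) (s t : α) : Prop :=
  ∃ g ∈ Subgroup.closure ({b, w, e} : Set (Equiv.Perm α)), g s = t

/-- The number of connected components of the map `(S, b, w, e)`. -/
def numComponents (S : Finset α) (b w e : Equiv.Perm α) : ℕ :=
  (S.image fun s => S.filter (SameComponent b w e s)).card

/-- The number of vertices of the map `(S, b, w, e)`: black vertices are the polygons
of `L(b,e)`, white vertices are the polygons of `L(w,e)`. -/
def numVertices (S : Finset α) (b w e : Equiv.Perm α) : ℕ :=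
  numFaces S b e + numFaces S w e

/-- The number of edges of a map with edge-side set `S`. -/
def numEdges (S : Finset α) : ℕ := S.card / 2

/-- The Euler characteristic `χ(M) = |V(M)| - |E(M)| + |F(M)|` of the map
`M = (S, b, w, e)`. -/
def eulerChar (S : Finset α) (b w e : Equiv.Perm α) : ℤ :=
  (numVertices S b w e : ℤ) - (numEdges S : ℤ) + (numFaces S b w : ℤ)

/-- The quantity `d(M) = 2·(number of connected components of M) - χ(M)`. -/
def dInv (S : Finset α) (b w e : Equiv.Perm α) : ℤ :=
  2 * (numComponents S b w e : ℤ) - eulerChar S b w e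

/-- The edge `{s, e s}` of the map `(b, w, e)` is a *bridge*: either one of its
extremities is a leaf (the pair belongs to `b` or to `w` as well), or its two
extremities lie in different connected components of the map with this edge removed. -/
def IsBridge (b w e : Equiv.Perm α) (s : α) : Prop :=
  (b s = e s ∨ w s = e s) ∨
    ¬ SameComponent (removeP b s (e s)) (removeP w s (e s)) (removeP e s (e s))
        (b s) (w s)

/-- The weight of the edge `{s,t}` in the map with face structure given by `(b,w)`,
as a polynomial in the variable `γ` (over `ℚ`): `1` for a straight edge, `γ` for a
twisted edge, `1/2` for an interface edge. -/
def edgeWeight (b w : Equiv.Perm α) (s t : α) : Polynomial ℚ :=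
  if IsStraight b w s t then 1
  else if IsTwisted b w s t then Polynomial.X
  else Polynomial.C (1 / 2)

/-- The weight `w_{M,≺}` of a map `(b,w,e)` equipped with a history, the latter
encoded as the list of the edges in increasing order (each edge represented by one
of its edge-sides): the product of the weights of the edges, each weight being
computed in the map in which all previous edges have already been removed. -/
def histWeight : Equiv.Perm α → Equiv.Perm α → Equiv.Perm α → List α → Polynomial ℚ
  | _, _, _, [] => 1
  | b, w, e, s :: L =>
      edgeWeight b w s (e s) *
        histWeight (removeP b s (e s)) (removeP w s (e s)) (removeP e s (e s)) L

/-- `L` encodes a *history* (a linear order on the edges) of the map with edge-side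
set `S` and edge pairing `e`: it lists every edge exactly once, each edge being
represented by its smaller edge-side. -/
def IsHistory [LinearOrder α] (S : Finset α) (e : Equiv.Perm α) (L : List α) : Prop :=
  L.Nodup ∧ (∀ s ∈ L, s ∈ S ∧ s < e s) ∧ ∀ a ∈ S, a ∈ L ∨ e a ∈ L

/-- The *measure of non-orientability* `w_M` of the map `(S,b,w,e)`: the average of
`w_{M,≺}` over all `n!` histories `≺`, as a polynomial in the variable `γ` over `ℚ`. -/
def mapWeight [LinearOrder α] (S : Finset α) (b w e : Equiv.Perm α) : Polynomial ℚ :=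
  Polynomial.C (1 / ((numEdges S).factorial : ℚ)) *
    ∑ F ∈ (Fintype.piFinset fun _ : Fin (numEdges S) => S).filter
        (fun F => IsHistory S e (List.ofFn F)),
      histWeight b w e (List.ofFn F)

/-- The number of embeddings `N_M(λ)` of the underlying bipartite graph of the map
`(S,b,w,e)` into the Young diagram whose list of row lengths is `lam`: an embedding
maps black vertices (polygons of `L(b,e)`) to rows, white vertices (polygons of
`L(w,e)`) to columns, and each edge to the box at the corresponding intersection;
it is encoded by a pair of functions on edge-sides that are constant on vertices. -/
def NMap (lam : List ℕ) (S : Finset α) (b w e : Equiv.Perm α) : ℕ :=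
  Nat.card {fp : (α → ℕ) × (α → ℕ) //
    (∀ s, s ∉ S → fp.1 s = 0 ∧ fp.2 s = 0) ∧
    (∀ s ∈ S, fp.1 (b s) = fp.1 s ∧ fp.1 (e s) = fp.1 s) ∧
    (∀ s ∈ S, fp.2 (w s) = fp.2 s ∧ fp.2 (e s) = fp.2 s) ∧
    ∀ s ∈ S, fp.2 s < lam.getD (fp.1 s) 0}

/-- The orientability generating series `\widehat{Ch}^{(α)}_π(λ)`, where the face-type
`π` is realized by the fixed couple of pairings `(b,w)` of `S`, `lam` is the list of
row lengths of the Young diagram `λ`, and `a` is the Jack parameter `α`: the sum over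
all pairings `e` of `S` (i.e., over all maps of face-type `π`) of
`(-1/√α)^{|V_•(M)|} (√α)^{|V_∘(M)|} w_M N_M(λ)`, times the sign `(-1)^{ℓ(π)}`,
where `w_M` is evaluated at `γ = (1-α)/√α`. -/
def genSeries [Fintype α] [LinearOrder α] (lam : List ℕ) (S : Finset α)
    (b w : Equiv.Perm α) (a : ℝ) : ℝ :=
  (-1 : ℝ) ^ numFaces S b w *
    ∑ e ∈ Finset.univ.filter fun e : Equiv.Perm α => IsPairing S e,
      (-1 / Real.sqrt a) ^ numFaces S b e * (Real.sqrt a) ^ numFaces S w e *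
        Polynomial.aeval ((1 - a) / Real.sqrt a) (mapWeight S b w e) *
          (NMap lam S b w e : ℝ)

/-- The number of embeddings `N_G(λ)` of the bipartite graph `G` with black vertex set
`ι`, white vertex set `κ` and edge relation `Edg` into the Young diagram whose list of
row lengths is `lam`: black vertices are mapped to rows of `λ`, white vertices to
columns of `λ`, and every edge to the box at the corresponding intersection, which
must belong to `λ`. -/
def NGraph {ι κ : Type*} (lam : List ℕ) (Edg : ι → κ → Prop) : ℕ :=
  Nat.card {fp : (ι → ℕ) × (κ → ℕ) //
    (∀ u, 0 < lam.getD (fp.1 u) 0) ∧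
    (∀ v, ∃ i, fp.2 v < lam.getD i 0) ∧
    ∀ u v, Edg u v → fp.2 v < lam.getD (fp.1 u) 0}

/-! Say `b s = e s = t`, so that `{s, t}` is a leaf, while `w s ≠ t`. Faces, black and white
vertices and connected components are the orbits of the groups generated by `{b, w}`, `{b, e}`,
`{w, e}` and `{b, w, e}`. Removing `{s, t}` fixes `s` and `t`, leaves the leaf pairings unchanged
elsewhere, and replaces the path `w s – s – t – w t` of `w` by the single pair `{w s, w t}`; so
two points of `S \ {s, t}` share an orbit after the removal iff they did before. Every orbit
through `s` also meets `w s`, except the orbit `{s, t}` of `⟨b, e⟩`: this black vertex alone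
disappears, and `d` is unchanged. -/

open MulAction Function

section ImageCard

variable {β γ : Type*} [DecidableEq β] [DecidableEq γ] {T : Finset α}

theorem card_image_prod_eq_card_image_of_eq_imp (f : α → β) (g : α → γ)
    (h : ∀ x ∈ T, ∀ y ∈ T, f x = f y → g x = g y) :
    (T.image fun x => (f x, g x)).card = (T.image f).card := by
  have hfst : T.image f = (T.image fun x => (f x, g x)).image Prod.fst := by
    rw [Finset.image_image]; rfl
  rw [hfst]
  refine (Finset.card_image_of_injOn ?_).symm
  rintro _ hp _ hq hpq
  obtain ⟨x, hx, rfl⟩ := Finset.mem_image.1 hp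
  obtain ⟨y, hy, rfl⟩ := Finset.mem_image.1 hq
  exact Prod.ext hpq (h x hx y hy hpq)

theorem card_image_eq_card_image_of_eq_iff {f : α → β} {g : α → γ}
    (h : ∀ x ∈ T, ∀ y ∈ T, f x = f y ↔ g x = g y) :
    (T.image f).card = (T.image g).card := by
  rw [← card_image_prod_eq_card_image_of_eq_imp f g (fun x hx y hy => (h x hx y hy).1),
    ← card_image_prod_eq_card_image_of_eq_imp g f (fun x hx y hy => (h x hx y hy).2),
    ← Finset.card_image_of_injective _ Prod.swap_injective, Finset.image_image]
  rfl

end ImageCard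

theorem card_image_filter_eq_card_image_mk (R : Setoid α) (P : α → α → Prop)
    (hP : ∀ x y, P x y ↔ R x y) (S : Finset α) :
    (S.image fun x => S.filter (P x)).card = (S.image (Quotient.mk R)).card := by
  refine card_image_eq_card_image_of_eq_iff fun x hx y hy => ?_
  simp only [Quotient.eq, Finset.ext_iff, Finset.mem_filter, hP]
  refine ⟨fun h => ((h y).2 ⟨hy, R.refl' y⟩).2, fun hxy z => ?_⟩
  exact and_congr_right fun _ => ⟨R.trans' (R.symm' hxy), R.trans' hxy⟩

theorem card_image_mk_congr {R R' : Setoid α} {T : Finset α}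
    (h : ∀ x ∈ T, ∀ y ∈ T, R x y ↔ R' x y) :
    (T.image (Quotient.mk R)).card = (T.image (Quotient.mk R')).card :=
  card_image_eq_card_image_of_eq_iff fun x hx y hy => by
    simp only [Quotient.eq, h x hx y hy]

theorem image_mk_eq_of_forall_exists_rel (R : Setoid α) {S T : Finset α} (hTS : T ⊆ S)
    (h : ∀ x ∈ S, ∃ y ∈ T, R x y) : T.image (Quotient.mk R) = S.image (Quotient.mk R) := by
  refine (Finset.image_subset_image hTS).antisymm fun q hq => ?_
  obtain ⟨x, hx, rfl⟩ := Finset.mem_image.1 hq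
  obtain ⟨y, hy, hxy⟩ := h x hx
  exact Finset.mem_image.2 ⟨y, hy, Quotient.sound (R.symm' hxy)⟩

theorem card_image_mk_eq_card_sdiff_add_one (R : Setoid α) {S : Finset α} {s t : α}
    (hs : s ∈ S) (hst : R s t) (hclass : ∀ u, R s u → u = s ∨ u = t) :
    (S.image (Quotient.mk R)).card = ((S \ {s, t}).image (Quotient.mk R)).card + 1 := by
  have hnot : Quotient.mk R s ∉ (S \ {s, t}).image (Quotient.mk R) := by
    simp only [Finset.mem_image, Finset.mem_sdiff, Finset.mem_insert, Finset.mem_singleton,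
      Quotient.eq, not_exists, not_and]
    exact fun u ⟨_, hu⟩ hus => hu (hclass u (R.symm' hus))
  rw [← Finset.card_insert_of_notMem hnot]
  congr 1
  ext q
  simp only [Finset.mem_insert, Finset.mem_image, Finset.mem_sdiff, Finset.mem_singleton]
  constructor
  · rintro ⟨x, hx, rfl⟩
    by_cases hxst : x = s ∨ x = t
    · refine Or.inl (Quotient.sound ?_)
      rcases hxst with rfl | rfl
      exacts [R.refl' x, R.symm' hst]
    · exact Or.inr ⟨x, ⟨hx, hxst⟩, rfl⟩
  · rintro (rfl | ⟨x, ⟨hx, _⟩, rfl⟩)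
    exacts [⟨s, hs, rfl⟩, ⟨x, hx, rfl⟩]

section Orbits

variable {G G' : Set (Perm α)}

theorem orbitRel_closure_iff {x y : α} :
    orbitRel (Subgroup.closure G) α x y ↔ ∃ g ∈ Subgroup.closure G, g x = y := by
  rw [Setoid.comm', orbitRel_apply, mem_orbit_iff]
  exact ⟨fun ⟨g, hg⟩ => ⟨g, g.2, hg⟩, fun ⟨g, hg, hgx⟩ => ⟨⟨g, hg⟩, hgx⟩⟩

theorem orbitRel_closure_apply {p : Perm α} (hp : p ∈ G) (x : α) :
    orbitRel (Subgroup.closure G) α x (p x) :=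
  orbitRel_closure_iff.2 ⟨p, Subgroup.subset_closure hp, rfl⟩

theorem orbitRel_closure_map (r : α → α)
    (h : ∀ p ∈ G, ∀ x, orbitRel (Subgroup.closure G') α (r x) (r (p x))) {x y : α}
    (hxy : orbitRel (Subgroup.closure G) α x y) :
    orbitRel (Subgroup.closure G') α (r x) (r y) := by
  set R' := orbitRel (Subgroup.closure G') α
  obtain ⟨g, hg, rfl⟩ := orbitRel_closure_iff.1 hxy
  clear hxy
  induction hg using Subgroup.closure_induction generalizing x with
  | mem p hp => exact h p hp x
  | one => exact R'.refl' _
  | mul p q _ _ hp hq => exact R'.trans' (hq (x := x)) (hp (x := q x))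
  | inv p _ hp => simpa using R'.symm' (hp (x := p⁻¹ x))

theorem eq_of_orbitRel_closure {x y : α} (hx : ∀ p ∈ G, p x = x)
    (hxy : orbitRel (Subgroup.closure G) α x y) : y = x := by
  obtain ⟨g, hg, rfl⟩ := orbitRel_closure_iff.1 hxy
  have : g ∈ stabilizer (Perm α) x :=
    (Subgroup.closure_le _).2 (fun p hp => mem_stabilizer_iff.2 (hx p hp)) hg
  exact mem_stabilizer_iff.1 this

end Orbits

def numOrbits (S : Finset α) (G : Set (Perm α)) : ℕ :=
  (S.image (Quotient.mk (orbitRel (Subgroup.closure G) α))).card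

theorem sameFace_iff_exists {b w : Perm α} (hb : Involutive b) (hw : Involutive w) {x y : α} :
    SameFace b w x y ↔ ∃ g ∈ Subgroup.closure {b, w}, g x = y := by
  have hbm : b ∈ Subgroup.closure {b, w} := Subgroup.subset_closure (by simp)
  have hwm : w ∈ Subgroup.closure {b, w} := Subgroup.subset_closure (by simp)
  constructor
  · rintro (⟨j, rfl⟩ | ⟨j, rfl⟩)
    · exact ⟨_, mul_mem (zpow_mem (mul_mem hwm hbm) j) hbm, rfl⟩
    · exact ⟨_, zpow_mem (mul_mem hwm hbm) j, rfl⟩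
  rintro ⟨g, hg, rfl⟩
  have hbb : b * b = 1 := Equiv.ext hb
  have hww : w * w = 1 := Equiv.ext hw
  have hb' : b⁻¹ = b := inv_eq_of_mul_eq_one_right hbb
  have hw' : w⁻¹ = w := inv_eq_of_mul_eq_one_right hww
  suffices ∃ j : ℤ, g = (w * b) ^ j * b ∨ g = (w * b) ^ j by
    obtain ⟨j, rfl | rfl⟩ := this
    exacts [Or.inl ⟨j, rfl⟩, Or.inr ⟨j, rfl⟩]
  have step : ∀ g, (∃ j : ℤ, g = (w * b) ^ j * b ∨ g = (w * b) ^ j) → ∀ p ∈ ({b, w} : Set _),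
      ∃ j : ℤ, g * p = (w * b) ^ j * b ∨ g * p = (w * b) ^ j := by
    rintro g ⟨j, rfl | rfl⟩ p (rfl | rfl)
    · exact ⟨j, Or.inr (by rw [mul_assoc, hbb, mul_one])⟩
    · exact ⟨j - 1, Or.inr (by rw [zpow_sub_one, mul_inv_rev, hb', hw', mul_assoc])⟩
    · exact ⟨j, Or.inl rfl⟩
    · exact ⟨j + 1, Or.inl (by rw [zpow_add_one, mul_assoc, mul_assoc, hbb, mul_one])⟩
  induction hg using Subgroup.closure_induction_right with
  | one => exact ⟨0, Or.inr (by simp)⟩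
  | mul_right g _ p hp ih => exact step g ih p hp
  | mul_inv_cancel g _ p hp ih =>
    rcases hp with rfl | rfl
    · rw [hb']; exact step g ih _ (by simp)
    · rw [hw']; exact step g ih _ (by simp)

theorem numFaces_eq_numOrbits (S : Finset α) {b w : Perm α} (hb : Involutive b)
    (hw : Involutive w) : numFaces S b w = numOrbits S {b, w} :=
  card_image_filter_eq_card_image_mk _ _
    (fun _ _ => (sameFace_iff_exists hb hw).trans orbitRel_closure_iff.symm) S

theorem numComponents_eq_numOrbits (S : Finset α) (b w e : Perm α) :
    numComponents S b w e = numOrbits S {b, w, e} :=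
  card_image_filter_eq_card_image_mk _ _ (fun _ _ => orbitRel_closure_iff.symm) S

theorem IsPairing.apply_ne {S : Finset α} {f : Perm α} (hf : IsPairing S f) {a : α}
    (ha : a ∈ S) : f a ≠ a :=
  (hf.2 a).2 ha

theorem IsPairing.apply_mem {S : Finset α} {f : Perm α} (hf : IsPairing S f) {a : α}
    (ha : a ∈ S) : f a ∈ S :=
  (hf.2 _).1 (by rw [hf.1]; exact (hf.apply_ne ha).symm)

section RemoveP

variable {f : Perm α} {s t x : α}

theorem removeP_apply_left (hst : s ≠ t) (ht : f t ≠ t) : removeP f s t s = s := by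
  simp [removeP, swap_apply_of_ne_of_ne hst.symm ht.symm]

theorem removeP_apply_right (hst : s ≠ t) (ht : f t ≠ t) : removeP f s t t = t := by
  have : f t ≠ f s := fun h => hst (f.injective h).symm
  simp [removeP, swap_apply_of_ne_of_ne ht this]

theorem removeP_apply_of_ne (hf : Involutive f) (hxs : x ≠ s) (hxt : x ≠ t) (hxfs : x ≠ f s)
    (hxft : x ≠ f t) : removeP f s t x = f x := by
  have h1 : f x ≠ s := fun h => hxfs (hf.eq_iff.1 h)
  have h2 : f x ≠ t := fun h => hxft (hf.eq_iff.1 h)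
  have h3 : f x ≠ f s := fun h => hxs (f.injective h)
  have h4 : f x ≠ f t := fun h => hxt (f.injective h)
  simp [removeP, swap_apply_of_ne_of_ne, *]

theorem removeP_apply_apply_left (hf : Involutive f) (hst : s ≠ t) (hs : f s ≠ s)
    (hft : f t ≠ s) (ht : f t ≠ t) : removeP f s t (f s) = f t := by
  simp [removeP, hf s, swap_apply_of_ne_of_ne hst hs.symm, swap_apply_of_ne_of_ne hft ht]

theorem removeP_apply_apply_right (hf : Involutive f) (hst : s ≠ t) (hs : f s ≠ s)
    (hfs : f s ≠ t) : removeP f s t (f t) = f s := by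
  have : f s ≠ f t := fun h => hst (f.injective h)
  simp [removeP, hf t, swap_apply_of_ne_of_ne hs this, swap_apply_of_ne_of_ne hs hfs]

theorem Function.Involutive.removeP (hf : Involutive f) (hst : s ≠ t) (hs : f s ≠ s)
    (ht : f t ≠ t) : Involutive (_root_.removeP f s t) := by
  intro x
  by_cases hxs : x = s
  · rw [hxs, removeP_apply_left hst ht, removeP_apply_left hst ht]
  by_cases hxt : x = t
  · rw [hxt, removeP_apply_right hst ht, removeP_apply_right hst ht]
  by_cases hxfs : x = f s
  · have hfs : f s ≠ t := hxfs ▸ hxt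
    have hft : f t ≠ s := fun h => hfs (hf.eq_iff.1 h).symm
    rw [hxfs, removeP_apply_apply_left hf hst hs hft ht, removeP_apply_apply_right hf hst hs hfs]
  by_cases hxft : x = f t
  · have hft : f t ≠ s := hxft ▸ hxs
    have hfs : f s ≠ t := fun h => hft (hf.eq_iff.1 h).symm
    rw [hxft, removeP_apply_apply_right hf hst hs hfs, removeP_apply_apply_left hf hst hs hft ht]
  rw [removeP_apply_of_ne hf hxs hxt hxfs hxft, removeP_apply_of_ne hf, hf]
  · exact fun h => hxfs (hf.eq_iff.1 h)
  · exact fun h => hxft (hf.eq_iff.1 h)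
  · exact fun h => hxs (f.injective h)
  · exact fun h => hxt (f.injective h)

end RemoveP

section Removal

variable {G : Set (Perm α)} {s t : α}

theorem orbitRel_closure_removeP_apply (hinv : ∀ p ∈ G, Involutive p) (hst : s ≠ t)
    (hmove : ∀ p ∈ G, p s ≠ s ∧ p t ≠ t) {z : Perm α} (hz : z ∈ G) (hzs : z s = t)
    {p : Perm α} (hp : p ∈ G) (x : α) :
    orbitRel (Subgroup.closure G) α x (removeP p s t x) := by
  set R := orbitRel (Subgroup.closure G) α
  obtain ⟨hps, hpt⟩ := hmove p hp
  have hR : ∀ x, R x (p x) := orbitRel_closure_apply hp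
  have hpspt : R (p s) (p t) :=
    R.trans' (R.symm' (hR s)) (R.trans' (hzs ▸ orbitRel_closure_apply hz s) (hR t))
  by_cases hxs : x = s
  · rw [hxs, removeP_apply_left hst hpt]
  by_cases hxt : x = t
  · rw [hxt, removeP_apply_right hst hpt]
  by_cases hxps : x = p s
  · have hft : p t ≠ s := fun h => hxt (hxps.trans ((hinv p hp).eq_iff.1 h).symm)
    rwa [hxps, removeP_apply_apply_left (hinv p hp) hst hps hft hpt]
  by_cases hxpt : x = p t
  · have hfs : p s ≠ t := fun h => hxs (hxpt.trans ((hinv p hp).eq_iff.1 h).symm)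
    rw [hxpt, removeP_apply_apply_right (hinv p hp) hst hps hfs]
    exact R.symm' hpspt
  rw [removeP_apply_of_ne (hinv p hp) hxs hxt hxps hxpt]
  exact hR x

theorem orbitRel_of_orbitRel_closure_image_removeP (hinv : ∀ p ∈ G, Involutive p)
    (hst : s ≠ t) (hmove : ∀ p ∈ G, p s ≠ s ∧ p t ≠ t) {z : Perm α} (hz : z ∈ G)
    (hzs : z s = t) {x y : α}
    (hxy : orbitRel (Subgroup.closure ((removeP · s t) '' G)) α x y) :
    orbitRel (Subgroup.closure G) α x y := by
  refine orbitRel_closure_map id ?_ hxy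
  rintro _ ⟨p, hp, rfl⟩ x
  exact orbitRel_closure_removeP_apply hinv hst hmove hz hzs hp x

end Removal

section Counting

variable {S : Finset α} {G : Set (Perm α)} {s t : α}

theorem numOrbits_removeP_of_forall_apply_eq (hinv : ∀ p ∈ G, Involutive p)
    (hleaf : ∀ p ∈ G, p s = t) (hG : G.Nonempty) (hst : s ≠ t) (hs : s ∈ S) :
    numOrbits S G = numOrbits (S \ {s, t}) ((removeP · s t) '' G) + 1 := by
  set R := orbitRel (Subgroup.closure G) α
  set R' := orbitRel (Subgroup.closure ((removeP · s t) '' G)) α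
  have hpt : ∀ p ∈ G, p t = s := fun p hp => (hinv p hp).eq_iff.2 (hleaf p hp).symm
  have hmove : ∀ p ∈ G, p s ≠ s ∧ p t ≠ t := fun p hp => by
    rw [hleaf p hp, hpt p hp]; exact ⟨hst.symm, hst⟩
  obtain ⟨z, hz⟩ := hG
  have hst' : R s t := hleaf z hz ▸ orbitRel_closure_apply hz s
  -- collapsing `t` onto `s` turns every old step into a new step or a trivial one
  let r : α → α := fun x => if x = t then s else x
  have hback : ∀ {x y}, R x y → R' (r x) (r y) := by
    refine orbitRel_closure_map r fun p hp x => ?_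
    by_cases hxs : x = s
    · simp [r, hxs, hleaf p hp]
    by_cases hxt : x = t
    · simp [r, hxt, hpt p hp]
    have hpx : p x ≠ t := fun h => hxs (((hinv p hp).eq_iff.1 h).trans (hpt p hp))
    simp only [r, if_neg hxt, if_neg hpx]
    rw [← removeP_apply_of_ne (hinv p hp) hxs hxt (hleaf p hp ▸ hxt) (hpt p hp ▸ hxs)]
    exact orbitRel_closure_apply (Set.mem_image_of_mem _ hp) x
  have hclass : ∀ u, R s u → u = s ∨ u = t := by
    intro u hu
    have hfix : ∀ p' ∈ (removeP · s t) '' G, p' s = s := by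
      rintro _ ⟨p, hp, rfl⟩
      exact removeP_apply_left hst (hmove p hp).2
    by_cases hut : u = t
    · exact Or.inr hut
    have hsu := hback hu
    simp only [r, ite_self, if_neg hut] at hsu
    exact Or.inl (eq_of_orbitRel_closure hfix hsu)
  rw [numOrbits, card_image_mk_eq_card_sdiff_add_one R hs hst' hclass, numOrbits,
    card_image_mk_congr]
  intro x hx y hy
  simp only [Finset.mem_sdiff, Finset.mem_insert, Finset.mem_singleton, not_or] at hx hy
  refine ⟨fun hxy => ?_, orbitRel_of_orbitRel_closure_image_removeP hinv hst hmove hz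
    (hleaf z hz)⟩
  simpa [r, hx.2.2, hy.2.2] using hback hxy

end Counting

section Merge

variable {S : Finset α} {G : Set (Perm α)} {s t : α} {w : Perm α}

theorem orbitRel_closure_image_removeP_of_merge (hinv : ∀ p ∈ G, Involutive p) (hw : w ∈ G)
    (hG : ∀ p ∈ G, p = w ∨ p s = t) (hst : s ≠ t) (hws : w s ≠ s) (hwt : w t ≠ t)
    (hwst : w s ≠ t) {x y : α} (hx : x ≠ s ∧ x ≠ t) (hy : y ≠ s ∧ y ≠ t)
    (hxy : orbitRel (Subgroup.closure G) α x y) :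
    orbitRel (Subgroup.closure ((removeP · s t) '' G)) α x y := by
  set R' := orbitRel (Subgroup.closure ((removeP · s t) '' G)) α
  have hwts : w t ≠ s := fun h => hwst ((hinv w hw).eq_iff.1 h).symm
  have hW : R' (w s) (w t) := by
    simpa [removeP_apply_apply_left (hinv w hw) hst hws hwts hwt] using
      orbitRel_closure_apply (Set.mem_image_of_mem (removeP · s t) hw) (w s)
  -- the retraction pushes `s` and `t` to their `w`-partners, the ends of the merged pair
  let r : α → α := fun x => if x = s then w s else if x = t then w t else x
  have hr : ∀ x, x ≠ s → x ≠ t → r x = x := fun x h1 h2 => by simp [r, h1, h2]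
  have hrs : r s = w s := if_pos rfl
  have hrt : r t = w t := by simp [r, hst.symm]
  suffices h : ∀ p ∈ G, ∀ x, R' (r x) (r (p x)) by
    simpa [hr x hx.1 hx.2, hr y hy.1 hy.2] using orbitRel_closure_map r h hxy
  intro p hp x
  have hstep : x ≠ s → x ≠ t → x ≠ p s → x ≠ p t → R' (r x) (r (p x)) := fun h1 h2 h3 h4 => by
    rw [hr x h1 h2, hr (p x), ← removeP_apply_of_ne (hinv p hp) h1 h2 h3 h4]
    · exact orbitRel_closure_apply (Set.mem_image_of_mem _ hp) x
    · exact fun h => h3 ((hinv p hp).eq_iff.1 h)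
    · exact fun h => h4 ((hinv p hp).eq_iff.1 h)
  rcases hG p hp with rfl | hps
  · by_cases hxs : x = s
    · rw [hxs, hrs, hr _ hws hwst]
    by_cases hxt : x = t
    · rw [hxt, hrt, hr _ hwts hwt]
    by_cases hxps : x = p s
    · rw [hxps, hinv p hp, hrs, hr _ hws hwst]
    by_cases hxpt : x = p t
    · rw [hxpt, hinv p hp, hrt, hr _ hwts hwt]
    exact hstep hxs hxt hxps hxpt
  · have hpt : p t = s := (hinv p hp).eq_iff.2 hps.symm
    by_cases hxs : x = s
    · rwa [hxs, hps, hrs, hrt]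
    by_cases hxt : x = t
    · rw [hxt, hpt, hrs, hrt]; exact R'.symm' hW
    exact hstep hxs hxt (hps ▸ hxt) (hpt ▸ hxs)

theorem numOrbits_removeP_of_merge (hinv : ∀ p ∈ G, Involutive p) (hw : w ∈ G)
    (hG : ∀ p ∈ G, p = w ∨ p s = t) {z : Perm α} (hz : z ∈ G) (hzs : z s = t) (hst : s ≠ t)
    (hws : w s ≠ s) (hwt : w t ≠ t) (hwst : w s ≠ t) (hwsS : w s ∈ S) :
    numOrbits (S \ {s, t}) ((removeP · s t) '' G) = numOrbits S G := by
  set R := orbitRel (Subgroup.closure G) α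
  have hmove : ∀ p ∈ G, p s ≠ s ∧ p t ≠ t := fun p hp => by
    rcases hG p hp with rfl | hps
    · exact ⟨hws, hwt⟩
    · rw [hps, (hinv p hp).eq_iff.2 hps.symm]; exact ⟨hst.symm, hst⟩
  have hsws : R s (w s) := orbitRel_closure_apply hw s
  have hst' : R t s := R.symm' (hzs ▸ orbitRel_closure_apply hz s)
  rw [numOrbits, card_image_mk_congr (R' := R), numOrbits]
  · refine congrArg Finset.card (image_mk_eq_of_forall_exists_rel R Finset.sdiff_subset ?_)
    have hwsS' : w s ∈ S \ {s, t} := by simp [hwsS, hws, hwst]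
    intro x hx
    by_cases hxs : x = s
    · exact ⟨w s, hwsS', hxs ▸ hsws⟩
    by_cases hxt : x = t
    · exact ⟨w s, hwsS', hxt ▸ R.trans' hst' hsws⟩
    exact ⟨x, by simp [hx, hxs, hxt], R.refl' x⟩
  intro x hx y hy
  simp only [Finset.mem_sdiff, Finset.mem_insert, Finset.mem_singleton, not_or] at hx hy
  exact ⟨orbitRel_of_orbitRel_closure_image_removeP hinv hst hmove hz hzs,
    orbitRel_closure_image_removeP_of_merge hinv hw hG hst hws hwt hwst hx.2 hy.2⟩

end Merge

section Maps

variable {S : Finset α} {b w e p q : Perm α} {s t : α}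

theorem IsPairing.involutive_removeP (hp : IsPairing S p) (hs : s ∈ S) (ht : t ∈ S)
    (hst : s ≠ t) : Involutive (removeP p s t) :=
  Involutive.removeP hp.1 hst (hp.apply_ne hs) (hp.apply_ne ht)

theorem isStraight_of_apply_eq (hb : Involutive b) (h : b s = t ∨ w s = t) :
    IsStraight b w s t := by
  have heven : EvenPos b w s t := by
    rcases h with h | h
    · exact ⟨0, by simp [h]⟩
    · exact ⟨1, by simp [hb s, h]⟩
  exact ⟨Or.inl heven, heven⟩

theorem numEdges_eq_numEdges_sdiff_add_one (hs : s ∈ S) (ht : t ∈ S) (hst : s ≠ t) :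
    numEdges S = numEdges (S \ {s, t}) + 1 := by
  have hsub : {s, t} ⊆ S := Finset.insert_subset hs (Finset.singleton_subset_iff.2 ht)
  have h2 : 2 ≤ S.card := Finset.card_pair hst ▸ Finset.card_le_card hsub
  rw [numEdges, numEdges, Finset.card_sdiff_of_subset hsub, Finset.card_pair hst]
  omega

theorem numFaces_removeP_of_leaf (hp : IsPairing S p) (hq : IsPairing S q) (hs : s ∈ S)
    (hps : p s = t) (hqs : q s = t) :
    numFaces S p q = numFaces (S \ {s, t}) (removeP p s t) (removeP q s t) + 1 := by
  have hst : s ≠ t := hps ▸ (hp.apply_ne hs).symm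
  have ht : t ∈ S := hps ▸ hp.apply_mem hs
  rw [numFaces_eq_numOrbits _ hp.1 hq.1, numFaces_eq_numOrbits _
    (hp.involutive_removeP hs ht hst) (hq.involutive_removeP hs ht hst), ← Set.image_pair (removeP · s t)]
  refine numOrbits_removeP_of_forall_apply_eq ?_ ?_ (Set.insert_nonempty _ _) hst hs
  · rintro _ (rfl | rfl); exacts [hp.1, hq.1]
  · rintro _ (rfl | rfl); exacts [hps, hqs]

theorem numFaces_removeP_of_merge (hp : IsPairing S p) (hq : IsPairing S q) (hs : s ∈ S)
    (ht : t ∈ S) (hst : s ≠ t) (h : (p s = t ∧ q s ≠ t) ∨ (p s ≠ t ∧ q s = t)) :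
    numFaces (S \ {s, t}) (removeP p s t) (removeP q s t) = numFaces S p q := by
  rw [numFaces_eq_numOrbits _ hp.1 hq.1, numFaces_eq_numOrbits _
    (hp.involutive_removeP hs ht hst) (hq.involutive_removeP hs ht hst), ← Set.image_pair (removeP · s t)]
  have hinv : ∀ r ∈ ({p, q} : Set (Perm α)), Involutive r := by
    rintro _ (rfl | rfl); exacts [hp.1, hq.1]
  rcases h with ⟨hps, hqs⟩ | ⟨hps, hqs⟩
  · refine numOrbits_removeP_of_merge hinv (w := q) (by simp) ?_ (z := p) (by simp) hps hst
      (hq.apply_ne hs) (hq.apply_ne ht) hqs (hq.apply_mem hs)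
    rintro _ (rfl | rfl); exacts [Or.inr hps, Or.inl rfl]
  · refine numOrbits_removeP_of_merge hinv (w := p) (by simp) ?_ (z := q) (by simp) hqs hst
      (hp.apply_ne hs) (hp.apply_ne ht) hps (hp.apply_mem hs)
    rintro _ (rfl | rfl); exacts [Or.inl rfl, Or.inr hqs]

theorem numVertices_removeP (hb : IsPairing S b) (hw : IsPairing S w) (he : IsPairing S e)
    (hs : s ∈ S) (hes : e s = t) (h : (b s = t ∧ w s ≠ t) ∨ (b s ≠ t ∧ w s = t)) :
    numVertices S b w e
      = numVertices (S \ {s, t}) (removeP b s t) (removeP w s t) (removeP e s t) + 1 := by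
  have hst : s ≠ t := hes ▸ (he.apply_ne hs).symm
  have ht : t ∈ S := hes ▸ he.apply_mem hs
  unfold numVertices
  rcases h with ⟨hbs, hws⟩ | ⟨hbs, hws⟩
  · rw [numFaces_removeP_of_leaf hb he hs hbs hes,
      ← numFaces_removeP_of_merge hw he hs ht hst (Or.inr ⟨hws, hes⟩)]
    omega
  · rw [numFaces_removeP_of_leaf hw he hs hws hes,
      ← numFaces_removeP_of_merge hb he hs ht hst (Or.inr ⟨hbs, hes⟩)]
    omega

theorem numComponents_removeP (hb : IsPairing S b) (hw : IsPairing S w) (he : IsPairing S e)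
    (hs : s ∈ S) (hes : e s = t) (h : (b s = t ∧ w s ≠ t) ∨ (b s ≠ t ∧ w s = t)) :
    numComponents (S \ {s, t}) (removeP b s t) (removeP w s t) (removeP e s t)
      = numComponents S b w e := by
  have hst : s ≠ t := hes ▸ (he.apply_ne hs).symm
  have ht : t ∈ S := hes ▸ he.apply_mem hs
  rw [numComponents_eq_numOrbits, numComponents_eq_numOrbits]
  rw [← Set.image_pair (removeP · s t), ← Set.image_insert_eq (f := (removeP · s t))]
  have hinv : ∀ r ∈ ({b, w, e} : Set (Perm α)), Involutive r := by
    rintro _ (rfl | rfl | rfl); exacts [hb.1, hw.1, he.1]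
  rcases h with ⟨hbs, hws⟩ | ⟨hbs, hws⟩
  · refine numOrbits_removeP_of_merge hinv (w := w) (by simp) ?_ (z := e) (by simp) hes hst
      (hw.apply_ne hs) (hw.apply_ne ht) hws (hw.apply_mem hs)
    rintro _ (rfl | rfl | rfl); exacts [Or.inr hbs, Or.inl rfl, Or.inr hes]
  · refine numOrbits_removeP_of_merge hinv (w := b) (by simp) ?_ (z := e) (by simp) hes hst
      (hb.apply_ne hs) (hb.apply_ne ht) hbs (hb.apply_mem hs)
    rintro _ (rfl | rfl | rfl); exacts [Or.inl rfl, Or.inr hws, Or.inr hes]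

end Maps

/-- if exactly one extremity of the edge `E₀ = {s, e s}` of the map
`M = (S,b,w,e)` is a leaf, then `E₀` is straight, and `M \ E₀` has one fewer vertex
and one fewer edge than `M`, while the numbers of faces and of connected components
are unchanged; consequently `d(M \ E₀) = d(M)`. -/
theorem remove_edge_one_leaf (S : Finset α) (b w e : Equiv.Perm α)
    (hb : IsPairing S b) (hw : IsPairing S w) (he : IsPairing S e)
    (s : α) (hs : s ∈ S)
    (hleaf : (b s = e s ∧ w s ≠ e s) ∨ (b s ≠ e s ∧ w s = e s)) :
    IsStraight b w s (e s) ∧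
    numVertices S b w e
      = numVertices (S \ {s, e s}) (removeP b s (e s)) (removeP w s (e s))
          (removeP e s (e s)) + 1 ∧
    numEdges S = numEdges (S \ {s, e s}) + 1 ∧
    numFaces (S \ {s, e s}) (removeP b s (e s)) (removeP w s (e s)) = numFaces S b w ∧
    numComponents (S \ {s, e s}) (removeP b s (e s)) (removeP w s (e s))
        (removeP e s (e s)) = numComponents S b w e ∧
    dInv (S \ {s, e s}) (removeP b s (e s)) (removeP w s (e s)) (removeP e s (e s))
      = dInv S b w e := by
  have hst : s ≠ e s := (he.apply_ne hs).symm
  have ht : e s ∈ S := he.apply_mem hs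
  have hV := numVertices_removeP hb hw he hs rfl hleaf
  have hE := numEdges_eq_numEdges_sdiff_add_one hs ht hst
  have hF := numFaces_removeP_of_merge hb hw hs ht hst hleaf
  have hC := numComponents_removeP hb hw he hs rfl hleaf
  refine ⟨isStraight_of_apply_eq hb.1 (hleaf.imp And.left And.right), hV, hE, hF, hC, ?_⟩
  simp only [dInv, eulerChar, hV, hE, hF, hC]
  push_cast
  ring
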